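/- arXiv:math/0503232 — 4 statements merged into one kernel-verified Lean document; each statement's English description precedes it below -/
import Mathlib

section
/- Let φ : [0,∞) → (0,1] satisfy: for every c ∈ (0,1) there exists φ_c : [0,∞) → (0,1] with φ(s) = φ(c·s)·φ_c(s) for all s ≥ 0 (φ is selfdecomposable). Let ψ : (0,∞) → [0,∞) satisfy ψ(x) = a·ψ(b·x) for some a > 1, b > 1 and all x > 0. Then G(x) = φ(ψ(x)) satisfies G(x) = G(b·x)·H(x) for all x > 0, where H(x) = φ_{1/a}(ψ(x)). -/
theorem stmt_7 (φ : ℝ → ℝ) (Φ : ℝ → ℝ → ℝ) (ψ : ℝ → ℝ) (a b : ℝ)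
    (ha : 1 < a) (hb : 1 < b)
    (hφ : ∀ s : ℝ, 0 ≤ s → 0 < φ s ∧ φ s ≤ 1)
    (hΦ : ∀ c : ℝ, c ∈ Set.Ioo (0:ℝ) 1 → ∀ s : ℝ, 0 ≤ s → 0 < Φ c s ∧ Φ c s ≤ 1)
    (hSD : ∀ c : ℝ, c ∈ Set.Ioo (0:ℝ) 1 → ∀ s : ℝ, 0 ≤ s → φ s = φ (c * s) * Φ c s)
    (hψnn : ∀ x : ℝ, 0 < x → 0 ≤ ψ x)
    (hψeq : ∀ x : ℝ, 0 < x → ψ x = a * ψ (b * x)) :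
    ∀ x : ℝ, 0 < x → φ (ψ x) = φ (ψ (b * x)) * Φ (1 / a) (ψ x) := by
  intro x hx
  have ha0 : (0:ℝ) < a := lt_trans one_pos ha
  have hc : (1 / a) ∈ Set.Ioo (0:ℝ) 1 := ⟨by positivity, by rw [div_lt_one ha0]; exact ha⟩
  have h := hSD (1 / a) hc (ψ x) (hψnn x hx)
  have hbx : ψ (b * x) = (1 / a) * ψ x := by
    rw [hψeq x hx]; field_simp
  rw [h, hbx]
end

section
/- Let F be a distribution function on ℝ that is max-semi-SD(c) for some c > 0, i.e., F(x) = F(c·x)·H(x) for all x with H a distribution function. Then, with ρ = 1/c, there exists a stationary max-AR(1) process: if X₀ has distribution F, (εₙ) are i.i.d. with distribution H and independent of X₀, and Xₙ = max(ρ·X_{n–1}, εₙ), then every Xₙ has distribution function F. -/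
/-! Induction on `n`: since `ρ = 1/c`, the event `{max (ρ Xₙ) εₙ₊₁ ≤ x}` is `{Xₙ ≤ c x} ∩ {εₙ₊₁ ≤ x}`,
whose probability factorizes by independence into `F (c x) * H x = F x`. -/

open MeasureTheory ProbabilityTheory

theorem ProbabilityTheory.IndepFun.measure_max_le {Ω β : Type*} [MeasurableSpace Ω]
    {μ : Measure Ω} [LinearOrder β] [TopologicalSpace β] [OrderClosedTopology β]
    [MeasurableSpace β] [OpensMeasurableSpace β] {Y Z : Ω → β} (h : IndepFun Y Z μ) (x : β) :
    μ {ω | max (Y ω) (Z ω) ≤ x} = μ {ω | Y ω ≤ x} * μ {ω | Z ω ≤ x} := by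
  simp only [max_le_iff, Set.ofPred_and]
  exact h.measure_inter_preimage_eq_mul _ _ measurableSet_Iic measurableSet_Iic

theorem stmt_10_general {Ω : Type*} [MeasurableSpace Ω] (μ : Measure Ω) [IsProbabilityMeasure μ]
    (F H : ℝ → ℝ) (c ρ : ℝ) (hc : 0 < c) (hρ : ρ = 1 / c)
    (hmssd : ∀ x : ℝ, F x = F (c * x) * H x)
    (X ε : ℕ → Ω → ℝ)
    (hX0 : ∀ x : ℝ, (μ {ω | X 0 ω ≤ x}).toReal = F x)
    (hε : ∀ n : ℕ, ∀ x : ℝ, (μ {ω | ε n ω ≤ x}).toReal = H x)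
    (hindep : ∀ n : ℕ, IndepFun (X n) (ε (n + 1)) μ)
    (hrec : ∀ n : ℕ, ∀ ω : Ω, X (n + 1) ω = max (ρ * X n ω) (ε (n + 1) ω)) :
    ∀ n : ℕ, ∀ x : ℝ, (μ {ω | X n ω ≤ x}).toReal = F x := by
  subst hρ
  intro n
  induction n with
  | zero => exact hX0
  | succ n ih =>
    intro x
    have hindep_scaled : IndepFun (fun ω => 1 / c * X n ω) (ε (n + 1)) μ :=
      (hindep n).comp (measurable_const_mul (1 / c)) measurable_id
    have hscale : {ω | 1 / c * X n ω ≤ x} = {ω | X n ω ≤ c * x} := by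
      simp only [one_div, inv_mul_le_iff₀ hc]
    simp only [hrec n]
    rw [hindep_scaled.measure_max_le, hscale, ENNReal.toReal_mul, ih, hε, ← hmssd]

theorem stmt_10 {Ω : Type*} [MeasurableSpace Ω] (μ : Measure Ω) [IsProbabilityMeasure μ]
    (F H : ℝ → ℝ) (c ρ : ℝ) (hc : 0 < c) (hρ : ρ = 1 / c)
    (hmssd : ∀ x : ℝ, F x = F (c * x) * H x)
    (X ε : ℕ → Ω → ℝ)
    (hXmeas : ∀ n, Measurable (X n)) (hεmeas : ∀ n, Measurable (ε n))
    (hX0 : ∀ x : ℝ, (μ {ω | X 0 ω ≤ x}).toReal = F x)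
    (hε : ∀ n : ℕ, ∀ x : ℝ, (μ {ω | ε n ω ≤ x}).toReal = H x)
    (hindep : ∀ n : ℕ, IndepFun (X n) (ε (n + 1)) μ)
    (hrec : ∀ n : ℕ, ∀ ω : Ω, X (n + 1) ω = max (ρ * X n ω) (ε (n + 1) ω)) :
    ∀ n : ℕ, ∀ x : ℝ, (μ {ω | X n ω ≤ x}).toReal = F x :=
  stmt_10_general μ F H c ρ hc hρ hmssd X ε hX0 hε hindep hrec
end

section
/- Let ψ : (0,∞) → ℝ satisfy ψ(x) = a₁·ψ(b₁·x) and ψ(x) = a₂·ψ(b₂·x) for all x > 0, where a₁, a₂, b₁, b₂ > 1, aᵢ·bᵢ^(–α) = 1 for a common α > 0, log b₁ / log b₂ is irrational, and ψ is continuous. Then ψ(x) = λ·x^(–α) for all x > 0, for some constant λ ≥ 0. -/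
/-!
Writing `ψ x = x ^ (-α) * h (log x)`, each functional equation `ψ x = a * ψ (b * x)` with
`a * b ^ (-α) = 1` says that `h` is `log b`-periodic. The periods of a continuous function form a
closed subgroup of `ℝ`; containing `log b₁` and `log b₂` with irrational ratio, it is dense, hence
all of `ℝ`, so `h` is constant.
-/

open Real Function

namespace Function

def periods {G β : Type*} [AddGroup G] (f : G → β) : AddSubgroup G where
  carrier := {c | Periodic f c}
  zero_mem' x := by rw [add_zero]
  add_mem' := Periodic.add_period
  neg_mem' := Periodic.neg

theorem isClosed_periods {G β : Type*} [AddGroup G] [TopologicalSpace G] [ContinuousAdd G]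
    [TopologicalSpace β] [T2Space β] {f : G → β} (hf : Continuous f) :
    IsClosed (periods f : Set G) := by
  have : (periods f : Set G) = ⋂ x, {c | f (x + c) = f x} := by
    ext c
    simp only [Set.mem_iInter]
    rfl
  rw [this]
  exact isClosed_iInter fun x => isClosed_eq (hf.comp (continuous_const_add x)) continuous_const

end Function

theorem Continuous.eq_of_periodic_of_irrational {β : Type*} [TopologicalSpace β] [T2Space β]
    {f : ℝ → β} {p q : ℝ} (hf : Continuous f) (hp : Periodic f p) (hq : Periodic f q)
    (hpq : Irrational (p / q)) (x : ℝ) : f x = f 0 := by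
  have hdense : Dense (periods f : Set ℝ) :=
    (dense_addSubgroupClosure_pair_iff.2 hpq).mono <|
      AddSubgroup.closure_le _ |>.2 <| Set.pair_subset hp hq
  have huniv : (periods f : Set ℝ) = Set.univ := by
    rw [← (isClosed_periods hf).closure_eq, hdense.closure_eq]
  have hx : x ∈ periods f := by simp [← SetLike.mem_coe, huniv]
  simpa using hx.eq

theorem periodic_exp_mul_comp_exp {ψ : ℝ → ℝ} {a b α : ℝ} (hb : 0 < b)
    (hab : a * b ^ (-α) = 1) (heq : ∀ x, 0 < x → ψ x = a * ψ (b * x)) :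
    Periodic (fun t => ψ (exp t) * exp (α * t)) (log b) := by
  intro t
  have ha : a = b ^ α := by rw [eq_inv_of_mul_eq_one_left hab, rpow_neg hb.le, inv_inv]
  have hexp : exp (α * (t + log b)) = exp (α * t) * b ^ α := by
    rw [mul_add, exp_add, rpow_def_of_pos hb, mul_comm (log b)]
  simp only [exp_add, exp_log hb, mul_comm _ b, hexp, heq (exp t) (exp_pos t), ha]
  ring

theorem stmt_13_general (ψ : ℝ → ℝ) (a₁ a₂ b₁ b₂ α : ℝ)
    (hb₁ : 1 < b₁) (hb₂ : 1 < b₂)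
    (hab₁ : a₁ * b₁ ^ (-α) = 1) (hab₂ : a₂ * b₂ ^ (-α) = 1)
    (hirr : Irrational (Real.log b₁ / Real.log b₂))
    (hcont : ContinuousOn ψ (Set.Ioi 0))
    (hψnn : ∀ x : ℝ, 0 < x → 0 ≤ ψ x)
    (heq₁ : ∀ x : ℝ, 0 < x → ψ x = a₁ * ψ (b₁ * x))
    (heq₂ : ∀ x : ℝ, 0 < x → ψ x = a₂ * ψ (b₂ * x)) :
    ∃ lam : ℝ, 0 ≤ lam ∧ ∀ x : ℝ, 0 < x → ψ x = lam * x ^ (-α) := by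
  have hh : Continuous fun t => ψ (exp t) * exp (α * t) :=
    (hcont.comp_continuous continuous_exp exp_pos).mul (by fun_prop)
  have hconst := hh.eq_of_periodic_of_irrational
    (periodic_exp_mul_comp_exp (by linarith) hab₁ heq₁)
    (periodic_exp_mul_comp_exp (by linarith) hab₂ heq₂) hirr
  refine ⟨ψ 1, hψnn 1 one_pos, fun x hx => ?_⟩
  have hx' : ψ x * x ^ α = ψ 1 := by
    simpa [exp_log hx, rpow_def_of_pos hx, mul_comm α] using hconst (log x)
  rw [← hx', mul_assoc, ← rpow_add hx, add_neg_cancel, rpow_zero, mul_one]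

theorem stmt_13 (ψ : ℝ → ℝ) (a₁ a₂ b₁ b₂ α : ℝ)
    (ha₁ : 1 < a₁) (ha₂ : 1 < a₂) (hb₁ : 1 < b₁) (hb₂ : 1 < b₂) (hα : 0 < α)
    (hab₁ : a₁ * b₁ ^ (-α) = 1) (hab₂ : a₂ * b₂ ^ (-α) = 1)
    (hirr : Irrational (Real.log b₁ / Real.log b₂))
    (hcont : ContinuousOn ψ (Set.Ioi 0))
    (hψnn : ∀ x : ℝ, 0 < x → 0 ≤ ψ x)
    (heq₁ : ∀ x : ℝ, 0 < x → ψ x = a₁ * ψ (b₁ * x))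
    (heq₂ : ∀ x : ℝ, 0 < x → ψ x = a₂ * ψ (b₂ * x)) :
    ∃ lam : ℝ, 0 ≤ lam ∧ ∀ x : ℝ, 0 < x → ψ x = lam * x ^ (-α) :=
  stmt_13_general ψ a₁ a₂ b₁ b₂ α hb₁ hb₂ hab₁ hab₂ hirr hcont hψnn heq₁ heq₂
end

section
/- Let μ ≥ 0 be given by μ(y) = –log F(y) for a distribution function F with F(y) > 0, let φ : [0,∞) → (0,1] be a Laplace transform, and t > 0. If G_t(y) = (φ(μ(y)))^t and φ is selfdecomposable (for every c ∈ (0,1) there is a Laplace transform φ_c with φ(s) = φ(c·s)·φ_c(s)), and F is max-stable with F(y) = (F(b·y))^{a(b)} for every b > 1 with a(b) > 1, then for every b > 1, G_t(y) = G_t(b·y)·(φ_{1/a(b)}(μ(y)))^t for all y with F(y) > 0; i.e., each marginal of the compound extremal process is max-selfdecomposable. -/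
/-! Writing `μ = -log F`, max-stability `F y = F (b y) ^ a(b)` becomes `μ (b y) = μ y / a(b)`.
Selfdecomposability of `φ` at `c = 1 / a(b)`, evaluated at `s = μ y`, then reads
`φ (μ y) = φ (μ (b y)) · φ_c (μ y)`, and raising both sides to the power `t` gives the claim. -/

open Real Set

lemma pos_of_rpow_pos {x p : ℝ} (hx : 0 ≤ x) (hp : p ≠ 0) (h : 0 < x ^ p) : 0 < x := by
  refine hx.lt_of_ne fun hx0 => ?_
  rw [← hx0, zero_rpow hp] at h
  exact h.false

lemma neg_log_rpow {x : ℝ} (hx : 0 < x) (p : ℝ) : -log (x ^ p) = p * -log x := by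
  rw [log_rpow hx, mul_neg]

theorem stmt_16_general (F φ : ℝ → ℝ) (Φ : ℝ → ℝ → ℝ) (a : ℝ → ℝ) (t : ℝ)
    (hF01 : ∀ y : ℝ, 0 ≤ F y ∧ F y ≤ 1)
    (hφ : ∀ s : ℝ, 0 ≤ s → 0 < φ s ∧ φ s ≤ 1)
    (hΦ : ∀ c : ℝ, c ∈ Set.Ioo (0:ℝ) 1 → ∀ s : ℝ, 0 ≤ s → 0 < Φ c s ∧ Φ c s ≤ 1)
    (hSD : ∀ c : ℝ, c ∈ Set.Ioo (0:ℝ) 1 → ∀ s : ℝ, 0 ≤ s → φ s = φ (c * s) * Φ c s)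
    (hms : ∀ b : ℝ, 1 < b → 1 < a b ∧ ∀ y : ℝ, F y = (F (b * y)) ^ (a b)) :
    ∀ b : ℝ, 1 < b → ∀ y : ℝ, 0 < F y →
      (φ (-Real.log (F y))) ^ t =
        (φ (-Real.log (F (b * y)))) ^ t * (Φ (1 / a b) (-Real.log (F y))) ^ t := by
  intro b hb y hFy
  obtain ⟨ha, hstab⟩ := hms b hb
  have ha0 : 0 < a b := one_pos.trans ha
  have hc : 1 / a b ∈ Ioo (0 : ℝ) 1 := ⟨by positivity, (div_lt_one ha0).2 ha⟩
  have hFby : 0 < F (b * y) := pos_of_rpow_pos (hF01 _).1 ha0.ne' (hstab y ▸ hFy)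
  have hμ : 0 ≤ -log (F y) := neg_nonneg.2 (log_nonpos hFy.le (hF01 y).2)
  have hμb : -log (F (b * y)) = 1 / a b * -log (F y) := by
    rw [hstab y, neg_log_rpow hFby]
    field_simp
  rw [hSD _ hc _ hμ, hμb]
  exact mul_rpow (hφ _ (mul_nonneg hc.1.le hμ)).1.le (hΦ _ hc _ hμ).1.le

theorem stmt_16 (F φ : ℝ → ℝ) (Φ : ℝ → ℝ → ℝ) (a : ℝ → ℝ) (t : ℝ) (ht : 0 < t)
    (hF01 : ∀ y : ℝ, 0 ≤ F y ∧ F y ≤ 1)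
    (hφ : ∀ s : ℝ, 0 ≤ s → 0 < φ s ∧ φ s ≤ 1)
    (hΦ : ∀ c : ℝ, c ∈ Set.Ioo (0:ℝ) 1 → ∀ s : ℝ, 0 ≤ s → 0 < Φ c s ∧ Φ c s ≤ 1)
    (hSD : ∀ c : ℝ, c ∈ Set.Ioo (0:ℝ) 1 → ∀ s : ℝ, 0 ≤ s → φ s = φ (c * s) * Φ c s)
    (hms : ∀ b : ℝ, 1 < b → 1 < a b ∧ ∀ y : ℝ, F y = (F (b * y)) ^ (a b)) :
    ∀ b : ℝ, 1 < b → ∀ y : ℝ, 0 < F y →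
      (φ (-Real.log (F y))) ^ t =
        (φ (-Real.log (F (b * y)))) ^ t * (Φ (1 / a b) (-Real.log (F y))) ^ t :=
  stmt_16_general F φ Φ a t hF01 hφ hΦ hSD hms
end
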